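/- arXiv:2203.14701 — 17 statements merged into one kernel-verified Lean document; each statement's English description precedes it below -/
import Mathlib

section
/- Let N be a weakly S-primary submodule of an R-module M with weakly S-element s. Then for every a ∈ R with sa ∉ √(N :_R M), we have (N :_M a) ⊆ (0 :_M a) ∪ (N :_M s). -/
open Submodule

/-- `N` is a weakly `S`-primary submodule of `M`. -/
def IsWeaklySPrimary {R : Type*} [CommRing R] {M : Type*} [AddCommGroup M] [Module R M]
    (S : Set R) (N : Submodule R M) : Prop :=
  ((N.colon ⊤ : Ideal R) : Set R) ∩ S = ∅ ∧
    ∃ s ∈ S, ∀ (a : R) (m : M), a • m ≠ 0 → a • m ∈ N →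
      s * a ∈ (N.colon ⊤ : Ideal R).radical ∨ s • m ∈ N

/-- `N` is an `S`-primary submodule of `M`. -/
def IsSPrimary {R : Type*} [CommRing R] {M : Type*} [AddCommGroup M] [Module R M]
    (S : Set R) (N : Submodule R M) : Prop :=
  ((N.colon ⊤ : Ideal R) : Set R) ∩ S = ∅ ∧
    ∃ s ∈ S, ∀ (a : R) (m : M), a • m ∈ N →
      s * a ∈ (N.colon ⊤ : Ideal R).radical ∨ s • m ∈ N

/-- `N` is a weakly primary (proper) submodule of `M`. -/
def IsWeaklyPrimary {R : Type*} [CommRing R] {M : Type*} [AddCommGroup M] [Module R M]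
    (N : Submodule R M) : Prop :=
  N ≠ ⊤ ∧ ∀ (a : R) (m : M), a • m ≠ 0 → a • m ∈ N →
      a ∈ (N.colon ⊤ : Ideal R).radical ∨ m ∈ N

/-- `I` is a weakly `S`-primary ideal of `R`. -/
def IsWeaklySPrimaryIdeal {R : Type*} [CommRing R] (S : Set R) (I : Ideal R) : Prop :=
  (I : Set R) ∩ S = ∅ ∧
    ∃ s ∈ S, ∀ a b : R, a * b ≠ 0 → a * b ∈ I → s * a ∈ I.radical ∨ s * b ∈ I

theorem stmt0 {R : Type*} [CommRing R] {M : Type*} [AddCommGroup M] [Module R M]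
    (S : Set R) (hS : ∀ x ∈ S, ∀ y ∈ S, x * y ∈ S)
    (N : Submodule R M)
    (hdisj : ((N.colon ⊤ : Ideal R) : Set R) ∩ S = ∅)
    (s : R) (hs : s ∈ S)
    (hwse : ∀ (a : R) (m : M), a • m ≠ 0 → a • m ∈ N →
      s * a ∈ (N.colon ⊤ : Ideal R).radical ∨ s • m ∈ N)
    (a : R) (ha : s * a ∉ (N.colon ⊤ : Ideal R).radical) :
    {m : M | a • m ∈ N} ⊆ {m : M | a • m = 0} ∪ {m : M | s • m ∈ N} := by
  intro m hm
  by_cases h : a • m = 0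
  · exact Or.inl h
  · exact Or.inr ((hwse a m h hm).resolve_left ha)
end

section
/- Let N be a submodule of an R-module M with (N :_R M) ∩ S = ∅. Suppose there exists s ∈ S such that for all a ∈ R with sa ∉ √(N :_R M), either (N :_M a) = (0 :_M a) or (N :_M a) ⊆ (N :_M s). Then N is a weakly S-primary submodule of M. -/
open Submodule

theorem stmt1 {R : Type*} [CommRing R] {M : Type*} [AddCommGroup M] [Module R M]
    (S : Set R) (hS : ∀ x ∈ S, ∀ y ∈ S, x * y ∈ S)
    (N : Submodule R M)
    (hdisj : ((N.colon ⊤ : Ideal R) : Set R) ∩ S = ∅)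
    (h : ∃ s ∈ S, ∀ a : R, s * a ∉ (N.colon ⊤ : Ideal R).radical →
      ({m : M | a • m ∈ N} = {m : M | a • m = 0} ∨
        {m : M | a • m ∈ N} ⊆ {m : M | s • m ∈ N})) :
    IsWeaklySPrimary S N := by
  obtain ⟨s, hsS, hs⟩ := h
  refine ⟨hdisj, s, hsS, fun a m hne hmem => ?_⟩
  by_cases hr : s * a ∈ (N.colon ⊤ : Ideal R).radical
  · exact Or.inl hr
  · rcases hs a hr with heq | hsub
    · have : m ∈ {m : M | a • m = 0} := heq ▸ (hmem : m ∈ {m : M | a • m ∈ N})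
      exact absurd this hne
    · exact Or.inr (hsub hmem)
end

section
/- A submodule N of an R-module M with (N :_R M) ∩ S = ∅ is weakly S-primary if and only if there exists s ∈ S such that for every ideal I of R and every submodule K of M with 0 ≠ IK ⊆ N (i.e., IK ⊆ N and IK ≠ 0), either sI ⊆ √(N :_R M) or sK ⊆ N. -/
open Submodule

theorem stmt2 {R : Type*} [CommRing R] {M : Type*} [AddCommGroup M] [Module R M]
    (S : Set R) (hS : ∀ x ∈ S, ∀ y ∈ S, x * y ∈ S)
    (N : Submodule R M)
    (hdisj : ((N.colon ⊤ : Ideal R) : Set R) ∩ S = ∅) :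
    IsWeaklySPrimary S N ↔
      ∃ s ∈ S, ∀ (I : Ideal R) (K : Submodule R M), I • K ≠ ⊥ → I • K ≤ N →
        (∀ a ∈ I, s * a ∈ (N.colon ⊤ : Ideal R).radical) ∨ (∀ k ∈ K, s • k ∈ N) := by

  constructor
  · rintro ⟨-, s, hsS, hW⟩
    refine ⟨s * s, hS s hsS s hsS, ?_⟩
    intro I K hne hle
    set P : Ideal R := (N.colon ⊤ : Ideal R).radical with hP
    by_cases ha : ∀ a ∈ I, s * s * a ∈ P
    · exact Or.inl ha
    · right
      push_neg at ha
      obtain ⟨a₀, ha₀I, ha₀⟩ := ha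
      have hsa₀ : s * a₀ ∉ P := by
        intro h
        exact ha₀ (by rw [mul_assoc]; exact Ideal.mul_mem_left _ s h)
      have L1 : ∀ b ∈ I, s * b ∉ P → ∀ k ∈ K, b • k ≠ 0 → ∀ m ∈ K, s • m ∈ N := by
        intro b hbI hsb k hkK hbk m hmK
        by_cases hbm : b • m = 0
        · have h1 : b • (m + k) ≠ 0 := by
            rw [smul_add, hbm, zero_add]; exact hbk
          have h2 : b • (m + k) ∈ N :=
            hle (Submodule.smul_mem_smul hbI (K.add_mem hmK hkK))
          rcases hW b (m + k) h1 h2 with h | h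
          · exact absurd h hsb
          · rcases hW b k hbk (hle (Submodule.smul_mem_smul hbI hkK)) with h' | h'
            · exact absurd h' hsb
            · have hsub : s • (m + k) - s • k ∈ N := N.sub_mem h h'
              simpa [smul_add] using hsub
        · rcases hW b m hbm (hle (Submodule.smul_mem_smul hbI hmK)) with h | h
          · exact absurd h hsb
          · exact h
      have hex : ∃ b ∈ I, ∃ k ∈ K, b • k ≠ 0 := by
        by_contra hc
        push_neg at hc
        apply hne
        rw [eq_bot_iff]
        exact Submodule.smul_le.mpr fun b hb k hk => by
          simp [hc b hb k hk]
      obtain ⟨b, hbI, k, hkK, hbk⟩ := hex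
      intro m hmK
      have key : s • m ∈ N := by
        by_cases ha₀K : ∃ k' ∈ K, a₀ • k' ≠ 0
        · obtain ⟨k', hk'K, hk'⟩ := ha₀K
          exact L1 a₀ ha₀I hsa₀ k' hk'K hk' m hmK
        · push_neg at ha₀K
          by_cases hsb : s * b ∈ P
          · have hab : s * (a₀ + b) ∉ P := by
              intro h
              apply hsa₀
              have := P.sub_mem h hsb
              simpa [mul_add] using this
            have habk : (a₀ + b) • k ≠ 0 := by
              rw [add_smul, ha₀K k hkK, zero_add]; exact hbk
            exact L1 (a₀ + b) (I.add_mem ha₀I hbI) hab k hkK habk m hmK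
          · exact L1 b hbI hsb k hkK hbk m hmK
      rw [mul_smul]
      exact N.smul_mem s key
  · rintro ⟨s, hsS, h⟩
    refine ⟨hdisj, s, hsS, ?_⟩
    intro a m hne hmem
    have hle : (Ideal.span {a}) • (Submodule.span R {m} : Submodule R M) ≤ N := by
      refine Submodule.smul_le.mpr fun r hr n hn => ?_
      obtain ⟨c, hc⟩ := Ideal.mem_span_singleton.mp hr
      obtain ⟨d, hd⟩ := Submodule.mem_span_singleton.mp hn
      rw [hc, ← hd]
      have : (a * c) • d • m = (c * d) • a • m := by
        rw [smul_smul, smul_smul]; ring_nf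
      rw [this]
      exact N.smul_mem _ hmem
    have hnb : (Ideal.span {a}) • (Submodule.span R {m} : Submodule R M) ≠ ⊥ := by
      intro hb
      apply hne
      have : a • m ∈ (Ideal.span {a}) • (Submodule.span R {m} : Submodule R M) :=
        Submodule.smul_mem_smul (Ideal.subset_span rfl) (Submodule.mem_span_singleton_self m)
      rw [hb] at this
      simpa using this
    rcases h _ _ hnb hle with h1 | h1
    · exact Or.inl (h1 a (Ideal.subset_span rfl))
    · exact Or.inr (h1 m (Submodule.mem_span_singleton_self m))
end

section
/- Let N be a weakly S-primary submodule of an R-module M and let K be a submodule of M with (N :_R K) ∩ S = ∅ and Ann(K) = 0. Then (N :_R K) is a weakly S-primary ideal of R. In particular, if M is faithful, then (N :_R M) is a weakly S-primary ideal of R. -/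
open Submodule

lemma aux_colon {R : Type*} [CommRing R] {M : Type*} [AddCommGroup M] [Module R M]
    (S : Set R) (N : Submodule R M) (hN : IsWeaklySPrimary S N)
    (K : Submodule R M) (hdisjK : ((N.colon K : Ideal R) : Set R) ∩ S = ∅)
    (hK : ∀ r : R, (∀ k ∈ K, r • k = 0) → r = 0) :
    IsWeaklySPrimaryIdeal S (N.colon K) := by
  obtain ⟨hdisj, s, hsS, hs⟩ := hN
  refine ⟨hdisjK, s, hsS, fun a b hab habI => ?_⟩
  by_cases hsa : s * a ∈ (N.colon (⊤ : Submodule R M)).radical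
  · exact Or.inl (Ideal.radical_mono (Submodule.colon_mono le_rfl le_top) hsa)
  · right
    have hk0 : ∃ k₀ ∈ K, (a * b) • k₀ ≠ 0 := by
      by_contra h
      push_neg at h
      exact hab (hK (a * b) h)
    obtain ⟨k₀, hk₀K, hk₀⟩ := hk0
    have key : ∀ k ∈ K, (a * b) • k ≠ 0 → s • (b • k) ∈ N := by
      intro k hk hne
      have := hs a (b • k) (by rwa [smul_smul])
        (by rw [smul_smul]; exact Submodule.mem_colon.mp habI k hk)
      tauto
    have hk₀N : s • (b • k₀) ∈ N := key k₀ hk₀K hk₀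
    rw [Submodule.mem_colon]
    intro k hk
    rw [mul_smul]
    by_cases hz : (a * b) • k = 0
    · have hsum : s • (b • (k + k₀)) ∈ N :=
        key (k + k₀) (K.add_mem hk hk₀K)
          (by rw [smul_add, hz, zero_add]; exact hk₀)
      have heq : s • (b • (k + k₀)) - s • (b • k₀) = s • (b • k) := by
        rw [smul_add, smul_add]; abel
      have := N.sub_mem hsum hk₀N
      rwa [heq] at this
    · exact key k hk hz

theorem stmt3 {R : Type*} [CommRing R] {M : Type*} [AddCommGroup M] [Module R M]
    (S : Set R) (hS : ∀ x ∈ S, ∀ y ∈ S, x * y ∈ S)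
    (N : Submodule R M) (hN : IsWeaklySPrimary S N) :
    (∀ K : Submodule R M, ((N.colon K : Ideal R) : Set R) ∩ S = ∅ →
        (∀ r : R, (∀ k ∈ K, r • k = 0) → r = 0) →
        IsWeaklySPrimaryIdeal S (N.colon K)) ∧
      ((∀ r : R, (∀ m : M, r • m = 0) → r = 0) →
        IsWeaklySPrimaryIdeal S (N.colon ⊤)) := by
  refine ⟨fun K h1 h2 => aux_colon S N hN K h1 h2, fun hf => ?_⟩
  exact aux_colon S N hN ⊤ hN.1 (fun r hr => hf r (fun m => hr m Submodule.mem_top))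
end

section
/- Let M be a multiplication R-module and N a submodule such that (N :_R M) is a weakly S-primary ideal of R. Then N is a weakly S-primary submodule of M. -/
open Submodule

theorem stmt4 {R : Type*} [CommRing R] {M : Type*} [AddCommGroup M] [Module R M]
    (S : Set R) (hS : ∀ x ∈ S, ∀ y ∈ S, x * y ∈ S)
    (hmul : ∀ P : Submodule R M, ∃ I : Ideal R, P = I • (⊤ : Submodule R M))
    (N : Submodule R M)
    (hI : IsWeaklySPrimaryIdeal S (N.colon ⊤)) :
    IsWeaklySPrimary S N := by
  obtain ⟨hdisj, s, hsS, hs⟩ := hI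
  refine ⟨hdisj, s, hsS, ?_⟩
  intro a m hne hmem
  obtain ⟨I, hIm⟩ := hmul (Submodule.span R {m})
  have hcol : ∀ b ∈ I, a * b ∈ N.colon ⊤ := by
    intro b hb
    rw [Submodule.mem_colon]
    intro x _
    have hbx : b • x ∈ Submodule.span R {m} := by
      rw [hIm]; exact Submodule.smul_mem_smul hb trivial
    obtain ⟨r, hr⟩ := Submodule.mem_span_singleton.mp hbx
    have : (a * b) • x = r • (a • m) := by
      rw [mul_smul, ← hr, smul_comm]
    rw [this]
    exact N.smul_mem r hmem
  have hm : m ∈ I • (⊤ : Submodule R M) := hIm ▸ Submodule.mem_span_singleton_self m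
  have hb0 : ∃ b0 ∈ I, a * b0 ≠ 0 := by
    by_contra hc
    push_neg at hc
    apply hne
    have key : ∀ x ∈ I • (⊤ : Submodule R M), a • x = 0 := by
      intro x hx
      refine Submodule.smul_induction_on hx ?_ ?_
      · intro b hb y _
        rw [← mul_smul, hc b hb, zero_smul]
      · intro x y hx' hy'
        rw [smul_add, hx', hy', add_zero]
    exact key m hm
  by_cases hrad : s * a ∈ (N.colon ⊤ : Ideal R).radical
  · exact Or.inl hrad
  right
  obtain ⟨b0, hb0I, hab0⟩ := hb0
  have hsb0 : s * b0 ∈ N.colon ⊤ := by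
    rcases hs a b0 hab0 (hcol b0 hb0I) with h | h
    · exact absurd h hrad
    · exact h
  have hsb : ∀ b ∈ I, s * b ∈ N.colon ⊤ := by
    intro b hb
    by_cases hab : a * b = 0
    · have h1 : a * (b + b0) ≠ 0 := by rw [mul_add, hab, zero_add]; exact hab0
      rcases hs a (b + b0) h1 (hcol (b + b0) (I.add_mem hb hb0I)) with h | h
      · exact absurd h hrad
      · have h2 := (N.colon ⊤).sub_mem h hsb0
        rwa [mul_add, add_sub_cancel_right] at h2
    · rcases hs a b hab (hcol b hb) with h | h
      · exact absurd h hrad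
      · exact h
  have key : ∀ x ∈ I • (⊤ : Submodule R M), s • x ∈ N := by
    intro x hx
    refine Submodule.smul_induction_on hx ?_ ?_
    · intro b hb y _
      rw [← mul_smul]
      exact Submodule.mem_colon.mp (hsb b hb) y trivial
    · intro x y hx' hy'
      rw [smul_add]; exact N.add_mem hx' hy'
  exact key m hm
end

section
/- Let N be a weakly S-primary submodule of an R-module M and let T be a subset of R such that (0 :_M T) = 0 and Z_{(N:_R M)}(R) ∩ T = ∅. Then (N :_M T) is a weakly S-primary submodule of M. -/
open Submodule

/-
If `N` is weakly `S`-primary with witness `s`, `T` meets no zero divisor modulo `N :_R M` and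
`(0 :_M T) = 0`, then `N' = (N :_M T)` has the same colon ideal as `N`, and `s` still witnesses
that `N'` is weakly `S`-primary: from `0 ≠ a • m ∈ N'` we get `a • (t • m) ∈ N` for all `t ∈ T`,
and since `T` does not annihilate `a • m`, some `a • (t₁ • m)` is nonzero. The condition
`a • x ≠ 0` in the weak primary property can then be bypassed by passing from `t • m` to
`(t + t₁) • m`.
-/

section

variable {R M : Type*} [CommRing R] [AddCommGroup M] [Module R M]

theorem mem_iInf_comap_lsmul {N : Submodule R M} {T : Set R} {m : M} :
    m ∈ ⨅ t ∈ T, N.comap (LinearMap.lsmul R M t) ↔ ∀ t ∈ T, t • m ∈ N := by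
  simp only [mem_iInf, mem_comap, LinearMap.lsmul_apply]

theorem exists_smul_ne_zero_of_iInf_comap_lsmul_eq_bot {T : Set R}
    (hT : (⨅ t ∈ T, (⊥ : Submodule R M).comap (LinearMap.lsmul R M t)) = ⊥) {m : M}
    (hm : m ≠ 0) : ∃ t ∈ T, t • m ≠ 0 := by
  by_contra! h
  exact hm <| (mem_bot R).1 <| hT ▸ mem_iInf_comap_lsmul.2 fun t ht => (mem_bot R).2 (h t ht)

theorem colon_iInf_comap_lsmul {N : Submodule R M} {T : Set R} {t₀ : R} (ht₀ : t₀ ∈ T)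
    (hreg : ∀ u, t₀ * u ∈ N.colon ⊤ → u ∈ N.colon ⊤) :
    (⨅ t ∈ T, N.comap (LinearMap.lsmul R M t)).colon ⊤ = N.colon ⊤ := by
  apply le_antisymm
  · refine fun r hr => hreg r <| mem_colon.2 fun p _ => ?_
    rw [mul_smul]
    exact mem_iInf_comap_lsmul.1 (mem_colon.1 hr p (mem_top (R := R))) t₀ ht₀
  · refine fun r hr => mem_colon.2 fun p _ => mem_iInf_comap_lsmul.2 fun t _ => ?_
    rw [smul_comm]
    exact mem_colon.1 hr _ (mem_top (R := R))

theorem nontrivial_of_isWeaklySPrimary {S : Set R} {N : Submodule R M}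
    (hN : IsWeaklySPrimary S N) : Nontrivial M := by
  obtain ⟨hdisj, s, hs, -⟩ := hN
  by_contra hM
  have : Subsingleton M := not_nontrivial_iff_subsingleton.1 hM
  have hs_colon : s ∈ N.colon ⊤ :=
    mem_colon.2 fun p _ => by rw [Subsingleton.elim p 0, smul_zero]; exact N.zero_mem
  exact (Set.eq_empty_iff_forall_notMem.1 hdisj) s ⟨hs_colon, hs⟩

theorem smul_mem_of_smul_ne_zero_imp {N : Submodule R M} {a s : R}
    (h : ∀ x : M, a • x ≠ 0 → a • x ∈ N → s • x ∈ N) {y : M} (hy : a • y ≠ 0)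
    (hyN : a • y ∈ N) {x : M} (hxN : a • x ∈ N) : s • x ∈ N := by
  by_cases hx : a • x = 0
  · have hxy : a • (x + y) = a • y := by rw [smul_add, hx, zero_add]
    have hsxy : s • (x + y) ∈ N := h _ (hxy ▸ hy) (hxy ▸ hyN)
    simpa only [smul_add, add_sub_cancel_right] using N.sub_mem hsxy (h y hy hyN)
  · exact h x hx hxN

end

theorem stmt6_general {R : Type*} [CommRing R] {M : Type*} [AddCommGroup M] [Module R M]
    (S : Set R)
    (N : Submodule R M) (hN : IsWeaklySPrimary S N) (T : Set R)
    (hT0 : (⨅ t ∈ T, (⊥ : Submodule R M).comap (LinearMap.lsmul R M t)) = ⊥)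
    (hZT : {r : R | ∃ u : R, u ∉ (N.colon ⊤ : Ideal R) ∧ r * u ∈ (N.colon ⊤ : Ideal R)} ∩ T = ∅) :
    IsWeaklySPrimary S (⨅ t ∈ T, N.comap (LinearMap.lsmul R M t)) := by
  have : Nontrivial M := nontrivial_of_isWeaklySPrimary hN
  obtain ⟨hdisj, s, hs, hprim⟩ := hN
  obtain ⟨m₀, hm₀⟩ := exists_ne (0 : M)
  obtain ⟨t₀, ht₀, -⟩ := exists_smul_ne_zero_of_iInf_comap_lsmul_eq_bot hT0 hm₀
  have hcolon := colon_iInf_comap_lsmul (N := N) ht₀ fun u hu => by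
    by_contra hu'
    exact (Set.eq_empty_iff_forall_notMem.1 hZT) t₀ ⟨⟨u, hu', hu⟩, ht₀⟩
  refine ⟨hcolon ▸ hdisj, s, hs, fun a m ham hamN => ?_⟩
  rw [hcolon]
  refine or_iff_not_imp_left.2 fun hrad => ?_
  have hweak : ∀ x : M, a • x ≠ 0 → a • x ∈ N → s • x ∈ N :=
    fun x hx hxN => (hprim a x hx hxN).resolve_left hrad
  obtain ⟨t₁, ht₁, ht₁am⟩ := exists_smul_ne_zero_of_iInf_comap_lsmul_eq_bot hT0 ham
  rw [mem_iInf_comap_lsmul] at hamN ⊢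
  intro t ht
  rw [smul_comm]
  refine smul_mem_of_smul_ne_zero_imp hweak (y := t₁ • m) ?_ ?_ ?_
  · rwa [smul_comm]
  · rw [smul_comm]; exact hamN t₁ ht₁
  · rw [smul_comm]; exact hamN t ht

theorem stmt6 {R : Type*} [CommRing R] {M : Type*} [AddCommGroup M] [Module R M]
    (S : Set R) (hS : ∀ x ∈ S, ∀ y ∈ S, x * y ∈ S)
    (N : Submodule R M) (hN : IsWeaklySPrimary S N) (T : Set R)
    (hT0 : (⨅ t ∈ T, (⊥ : Submodule R M).comap (LinearMap.lsmul R M t)) = ⊥)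
    (hZT : {r : R | ∃ u : R, u ∉ (N.colon ⊤ : Ideal R) ∧ r * u ∈ (N.colon ⊤ : Ideal R)} ∩ T = ∅) :
    IsWeaklySPrimary S (⨅ t ∈ T, N.comap (LinearMap.lsmul R M t)) :=
  stmt6_general S N hN T hT0 hZT
end

section
/- Let N be a submodule of an R-module M with (N :_R M) ∩ S = ∅. If (N :_M s) is a weakly primary submodule of M for some s ∈ S, then N is a weakly S-primary submodule of M. -/
open Submodule

theorem stmt7 {R : Type*} [CommRing R] {M : Type*} [AddCommGroup M] [Module R M]
    (S : Set R) (hS : ∀ x ∈ S, ∀ y ∈ S, x * y ∈ S)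
    (N : Submodule R M)
    (hdisj : ((N.colon ⊤ : Ideal R) : Set R) ∩ S = ∅)
    (s : R) (hs : s ∈ S)
    (hwp : IsWeaklyPrimary (N.comap (LinearMap.lsmul R M s))) :
    IsWeaklySPrimary S N := by
  refine ⟨hdisj, s, hs, fun a m hne hmem => ?_⟩
  have hK : a • m ∈ N.comap (LinearMap.lsmul R M s) := by
    simpa [smul_smul, mul_comm] using N.smul_mem s hmem
  rcases hwp.2 a m hne hK with h | h
  · left
    rw [Ideal.mem_radical_iff] at h ⊢
    obtain ⟨n, hn⟩ := h
    refine ⟨n + 1, ?_⟩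
    have hsan : s * a ^ n ∈ N.colon ⊤ := by
      rw [Submodule.mem_colon] at hn ⊢
      intro p hp
      have := hn p hp
      simpa [smul_smul, mul_comm] using this
    have : (s * a) ^ (n + 1) = (s ^ n * a) * (s * a ^ n) := by ring
    rw [this]
    exact Ideal.mul_mem_left _ _ hsan
  · right
    simpa using h
end

section
/- Let N be a non-zero weakly S-primary submodule of an R-module M with S ∩ Z(M) = ∅. Then (N :_M s) is a weakly primary submodule of M for some s ∈ S. -/
open Submodule

/-
Take the witness `s` of weak `S`-primality of `N`. It is a non-zero-divisor on `M`, and no power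
of it lies in `√(N : M)` since `S` is multiplicatively closed and misses `(N : M)`. Hence, applied
to `s ^ k • m ∈ N`, the weak `S`-primary condition can only give `s • m ∈ N`: this lets one cancel
the extra powers of `s` that appear when the condition is applied to `a • (s • m) ∈ N`, and shows
that `(N :_M s)` is weakly primary.
-/

theorem pow_succ_mem_of_mul_mem {R : Type*} [Monoid R] {S : Set R}
    (hS : ∀ x ∈ S, ∀ y ∈ S, x * y ∈ S) {s : R} (hs : s ∈ S) (n : ℕ) : s ^ (n + 1) ∈ S := by
  induction n with
  | zero => simpa using hs
  | succ n ih => exact pow_succ s (n + 1) ▸ hS _ ih _ hs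

namespace Submodule

variable {R : Type*} [CommRing R] {M : Type*} [AddCommGroup M] [Module R M]

theorem notMem_radical_colon_of_mem {S : Set R} (hS : ∀ x ∈ S, ∀ y ∈ S, x * y ∈ S)
    {N : Submodule R M} (hdisj : ((N.colon ⊤ : Ideal R) : Set R) ∩ S = ∅) {s : R} (hs : s ∈ S) :
    s ∉ (N.colon ⊤ : Ideal R).radical := by
  rintro ⟨n, hn⟩
  have hmem : s ^ (n + 1) ∈ (N.colon ⊤ : Ideal R) := pow_succ s n ▸ Ideal.mul_mem_right s _ hn
  exact (Set.eq_empty_iff_forall_notMem.mp hdisj) _ ⟨hmem, pow_succ_mem_of_mul_mem hS hs n⟩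

theorem comap_lsmul_eq_top_iff {N : Submodule R M} {s : R} :
    N.comap (LinearMap.lsmul R M s) = ⊤ ↔ s ∈ N.colon ⊤ := by
  simp [eq_top_iff', mem_colon]

section WeaklyPrimaryComap

variable {N : Submodule R M} {s : R}
  (hws : ∀ (a : R) (m : M), a • m ≠ 0 → a • m ∈ N →
    s * a ∈ (N.colon ⊤ : Ideal R).radical ∨ s • m ∈ N)
  (hs : s ∉ (N.colon ⊤ : Ideal R).radical) (hreg : IsSMulRegular M s)
include hws hs hreg

theorem smul_mem_of_pow_smul_mem {k : ℕ} {m : M} (hm : s ^ k • m ∈ N) : s • m ∈ N := by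
  by_cases hm0 : m = 0
  · simp [hm0]
  have hne : s ^ k • m ≠ 0 := fun h => hm0 ((hreg.pow k).right_eq_zero_of_smul h)
  refine (hws _ m hne hm).resolve_left fun h => hs ?_
  exact Ideal.mem_radical_of_pow_mem (m := k + 1) (pow_succ' s k ▸ h)

theorem mem_radical_colon_comap_lsmul {a : R} (ha : s * a ∈ (N.colon ⊤ : Ideal R).radical) :
    a ∈ ((N.comap (LinearMap.lsmul R M s)).colon ⊤ : Ideal R).radical := by
  obtain ⟨n, hn⟩ := ha
  refine ⟨n, mem_colon.mpr fun m _ => ?_⟩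
  have h : s ^ n • a ^ n • m ∈ N := by
    rw [← mul_smul, ← mul_pow]
    exact mem_colon.mp hn m trivial
  simpa [smul_comm s] using smul_mem_of_pow_smul_mem hws hs hreg h

theorem isWeaklyPrimary_comap_lsmul : IsWeaklyPrimary (N.comap (LinearMap.lsmul R M s)) := by
  refine ⟨fun htop => hs (Ideal.le_radical (comap_lsmul_eq_top_iff.mp htop)), ?_⟩
  intro a m hne hmem
  have hmem' : a • s • m ∈ N := by simpa using hmem
  have hne' : a • s • m ≠ 0 := fun h => hne (hreg.right_eq_zero_of_smul (smul_comm s a m ▸ h))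
  rcases hws a (s • m) hne' hmem' with ha | hsm
  · exact Or.inl (mem_radical_colon_comap_lsmul hws hs hreg ha)
  · exact Or.inr (smul_mem_of_pow_smul_mem hws hs hreg (k := 2) (by rwa [pow_two, mul_smul]))

end WeaklyPrimaryComap

end Submodule

theorem stmt8_general {R : Type*} [CommRing R] {M : Type*} [AddCommGroup M] [Module R M]
    (S : Set R) (hS : ∀ x ∈ S, ∀ y ∈ S, x * y ∈ S)
    (N : Submodule R M) (hN : IsWeaklySPrimary S N)
    (hZ : S ∩ {r : R | ∃ m : M, m ≠ 0 ∧ r • m = 0} = ∅) :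
    ∃ s ∈ S, IsWeaklyPrimary (N.comap (LinearMap.lsmul R M s)) := by
  obtain ⟨hdisj, s, hsS, hws⟩ := hN
  have hreg : IsSMulRegular M s := isSMulRegular_iff_right_eq_zero_of_smul.mpr fun m hm => by
    by_contra hm0
    exact (Set.eq_empty_iff_forall_notMem.mp hZ) s ⟨hsS, m, hm0, hm⟩
  exact ⟨s, hsS, isWeaklyPrimary_comap_lsmul hws (notMem_radical_colon_of_mem hS hdisj hsS) hreg⟩

theorem stmt8 {R : Type*} [CommRing R] {M : Type*} [AddCommGroup M] [Module R M]
    (S : Set R) (hS : ∀ x ∈ S, ∀ y ∈ S, x * y ∈ S)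
    (N : Submodule R M) (hN : IsWeaklySPrimary S N) (hN0 : N ≠ ⊥)
    (hZ : S ∩ {r : R | ∃ m : M, m ≠ 0 ∧ r • m = 0} = ∅) :
    ∃ s ∈ S, IsWeaklyPrimary (N.comap (LinearMap.lsmul R M s)) :=
  stmt8_general S hS N hN hZ
end

section
/- If N is a weakly S-primary submodule of an R-module M and Z(M) ∩ S = ∅, then there exists s ∈ S such that (N :_M t) ⊆ (N :_M s) for all t ∈ S. -/
open Submodule

theorem stmt10 {R : Type*} [CommRing R] {M : Type*} [AddCommGroup M] [Module R M]
    (S : Set R) (hS : ∀ x ∈ S, ∀ y ∈ S, x * y ∈ S)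
    (N : Submodule R M) (hN : IsWeaklySPrimary S N)
    (hZ : {r : R | ∃ m : M, m ≠ 0 ∧ r • m = 0} ∩ S = ∅) :
    ∃ s ∈ S, ∀ t ∈ S,
      N.comap (LinearMap.lsmul R M t) ≤ N.comap (LinearMap.lsmul R M s) := by
  obtain ⟨hdisj, s, hsS, hprim⟩ := hN
  refine ⟨s, hsS, fun t htS m hm => ?_⟩
  simp only [Submodule.mem_comap, LinearMap.lsmul_apply] at hm ⊢
  by_cases hm0 : m = 0
  · simp [hm0]
  by_cases htm : t • m = 0
  · exfalso
    have : t ∈ {r : R | ∃ m : M, m ≠ 0 ∧ r • m = 0} ∩ S := ⟨⟨m, hm0, htm⟩, htS⟩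
    rw [hZ] at this; exact this
  rcases hprim t m htm hm with hr | h
  · exfalso
    obtain ⟨n, hn⟩ := hr
    have hstS : s * t ∈ S := hS s hsS t htS
    have hpow : ∀ k : ℕ, (s * t) ^ (k + 1) ∈ S := by
      intro k
      induction k with
      | zero => simpa using hstS
      | succ k ih => rw [pow_succ]; exact hS _ ih _ hstS
    have hmem : (s * t) ^ (n + 1) ∈ (N.colon ⊤ : Ideal R) := by
      rw [pow_succ]; exact Ideal.mul_mem_right _ _ hn
    have : (s * t) ^ (n + 1) ∈ ((N.colon ⊤ : Ideal R) : Set R) ∩ S := ⟨hmem, hpow n⟩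
    rw [hdisj] at this; exact this
  · exact h
end

section
/- Let M be a finitely generated R-module with Z(M) ∩ S = ∅, and let N be a submodule with (N :_R M) ∩ S = ∅. If S⁻¹N is a weakly primary submodule of S⁻¹M and there exists s ∈ S such that (N :_M t) ⊆ (N :_M s) for all t ∈ S, then N is a weakly S-primary submodule of M. -/
open Submodule

/-!
The canonical map `M → S⁻¹M` is injective because `S` avoids `Z(M)`, so `0 ≠ am ∈ N` gives
`0 ≠ (a/1)(m/1) ∈ S⁻¹N`, and weak primality of `S⁻¹N` applies. Either conclusion pulls back to
`M` only up to a factor `t ∈ S` depending on the element; the hypothesis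
`(N :_M t) ⊆ (N :_M s)` replaces every such `t` by the single `s`. Finally `s aⁿ ∈ (N :_R M)`
yields `s a ∈ √(N :_R M)` because `(s a)ⁿ⁺¹ = (sⁿ a)(s aⁿ)`.
-/

theorem Ideal.mul_mem_radical_of_mul_pow_mem {R : Type*} [CommSemiring R] {I : Ideal R}
    {s a : R} {n : ℕ} (h : s * a ^ n ∈ I) : s * a ∈ I.radical := by
  refine ⟨n + 1, ?_⟩
  have hfactor : (s * a) ^ (n + 1) = (s ^ n * a) * (s * a ^ n) := by ring
  rw [hfactor]
  exact I.mul_mem_left _ h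

namespace Submodule

variable {R S M N : Type*} [CommSemiring R] [CommSemiring S] [AddCommMonoid M] [AddCommMonoid N]
  [Module R M] [Module R N] [Algebra R S] [Module S N] [IsScalarTower R S N]
  {p : Submonoid R} [IsLocalization p S] {f : M →ₗ[R] N} [IsLocalizedModule p f]
  {P : Submodule R M}

theorem apply_mem_localized' {m : M} (h : m ∈ P) : f m ∈ P.localized' S p f :=
  ⟨m, h, 1, IsLocalizedModule.mk'_one p f m⟩

theorem exists_smul_mem_of_apply_mem_localized' {m : M} (h : f m ∈ P.localized' S p f) :
    ∃ t : p, t • m ∈ P := by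
  obtain ⟨n, hn, t, hnt⟩ := h
  rw [← IsLocalizedModule.mk'_one p f m, IsLocalizedModule.mk'_eq_mk'_iff] at hnt
  obtain ⟨u, hu⟩ := hnt
  refine ⟨u * t, ?_⟩
  rw [mul_smul, hu, one_smul]
  exact P.smul_of_tower_mem u hn

theorem exists_smul_mem_of_algebraMap_mem_colon_localized' {r : R}
    (h : algebraMap R S r ∈ (P.localized' S p f).colon ⊤) (m : M) : ∃ t : p, t • r • m ∈ P := by
  refine exists_smul_mem_of_apply_mem_localized' (S := S) (f := f) ?_
  rw [map_smul, ← algebraMap_smul S r (f m)]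
  exact mem_colon.mp h _ trivial

end Submodule

theorem stmt11_general {R : Type*} [CommRing R] {M : Type*} [AddCommGroup M] [Module R M]
    (S : Submonoid R) (N : Submodule R M)
    (hZ : {r : R | ∃ m : M, m ≠ 0 ∧ r • m = 0} ∩ (S : Set R) = ∅)
    (hdisj : ((N.colon ⊤ : Ideal R) : Set R) ∩ (S : Set R) = ∅)
    (hloc : IsWeaklyPrimary (N.localized S))
    (hs : ∃ s ∈ S, ∀ t ∈ S,
      N.comap (LinearMap.lsmul R M t) ≤ N.comap (LinearMap.lsmul R M s)) :
    IsWeaklySPrimary (S : Set R) N := by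
  obtain ⟨s, hsS, hsat⟩ := hs
  set f := LocalizedModule.mkLinearMap S M
  have hinj : Function.Injective f := by
    refine (IsLocalizedModule.injective_iff_isRegular S f).mpr fun t ↦
      IsSMulRegular.of_right_eq_zero_of_smul fun m htm ↦ ?_
    by_contra hm
    exact (Set.eq_empty_iff_forall_notMem.mp hZ) t ⟨⟨m, hm, htm⟩, t.2⟩
  refine ⟨hdisj, s, hsS, fun a m hne hmem ↦ ?_⟩
  have hfa : algebraMap R (Localization S) a • f m = f (a • m) := by
    rw [algebraMap_smul, map_smul]
  rcases hloc.2 _ (f m) (hfa ▸ (map_ne_zero_iff f hinj).mpr hne)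
    (hfa ▸ apply_mem_localized' hmem) with ⟨n, hn⟩ | hm
  · refine .inl (Ideal.mul_mem_radical_of_mul_pow_mem (n := n) (mem_colon.mpr fun x _ ↦ ?_))
    rw [← map_pow] at hn
    obtain ⟨t, ht⟩ := exists_smul_mem_of_algebraMap_mem_colon_localized' hn x
    rw [mul_smul]
    exact hsat t t.2 ht
  · obtain ⟨t, ht⟩ := exists_smul_mem_of_apply_mem_localized' hm
    exact .inr (hsat t t.2 ht)

theorem stmt11 {R : Type*} [CommRing R] {M : Type*} [AddCommGroup M] [Module R M]
    [Module.Finite R M]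
    (S : Submonoid R) (N : Submodule R M)
    (hZ : {r : R | ∃ m : M, m ≠ 0 ∧ r • m = 0} ∩ (S : Set R) = ∅)
    (hdisj : ((N.colon ⊤ : Ideal R) : Set R) ∩ (S : Set R) = ∅)
    (hloc : IsWeaklyPrimary (N.localized S))
    (hs : ∃ s ∈ S, ∀ t ∈ S,
      N.comap (LinearMap.lsmul R M t) ≤ N.comap (LinearMap.lsmul R M s)) :
    IsWeaklySPrimary (S : Set R) N :=
  stmt11_general S N hZ hdisj hloc hs
end

section
/- Let S be a multiplicatively closed subset of R and S* = {x ∈ R : xy ∈ S for some y ∈ R} its saturation. A submodule N of an R-module M is weakly S-primary if and only if N is weakly S*-primary. -/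
open Submodule

theorem stmt12 {R : Type*} [CommRing R] {M : Type*} [AddCommGroup M] [Module R M]
    (S : Set R) (hS : ∀ x ∈ S, ∀ y ∈ S, x * y ∈ S) (hSne : S.Nonempty)
    (N : Submodule R M) :
    IsWeaklySPrimary S N ↔ IsWeaklySPrimary {x : R | ∃ y : R, x * y ∈ S} N := by
  obtain ⟨z, hz⟩ := hSne
  have hsub : S ⊆ {x : R | ∃ y : R, x * y ∈ S} := fun x hx => ⟨z, hS x hx z hz⟩
  constructor
  · rintro ⟨hdisj, s, hsS, hmain⟩
    refine ⟨?_, s, hsub hsS, hmain⟩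
    ext x
    simp only [Set.mem_inter_iff, Set.mem_empty_iff_false, iff_false, not_and]
    rintro hx ⟨y, hy⟩
    have : x * y ∈ ((N.colon ⊤ : Ideal R) : Set R) := Ideal.mul_mem_right y _ hx
    exact Set.eq_empty_iff_forall_notMem.mp hdisj _ ⟨this, hy⟩
  · rintro ⟨hdisj, s, ⟨t, hst⟩, hmain⟩
    refine ⟨?_, s * t, hst, fun a m h0 hmem => ?_⟩
    · apply Set.eq_empty_of_subset_empty
      rw [← hdisj]
      exact Set.inter_subset_inter_right _ hsub
    · rcases hmain a m h0 hmem with h | h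
      · left
        have : s * t * a = t * (s * a) := by ring
        rw [this]
        exact Ideal.mul_mem_left _ t h
      · right
        have : (s * t) • m = t • (s • m) := by rw [mul_comm, mul_smul]
        rw [this]
        exact Submodule.smul_mem _ t h
end

section
/- Let f : M → M' be a surjective R-module homomorphism and N a weakly S-primary submodule of M containing ker(f). Then f(N) is a weakly S-primary submodule of M'. -/
open Submodule

theorem stmt13 {R : Type*} [CommRing R] {M M' : Type*} [AddCommGroup M] [Module R M]
    [AddCommGroup M'] [Module R M']
    (S : Set R) (hS : ∀ x ∈ S, ∀ y ∈ S, x * y ∈ S)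
    (f : M →ₗ[R] M') (hf : Function.Surjective f)
    (N : Submodule R M) (hker : LinearMap.ker f ≤ N)
    (hN : IsWeaklySPrimary S N) :
    IsWeaklySPrimary S (N.map f) := by
  obtain ⟨hdisj, s, hs, hprim⟩ := hN
  have hmem : ∀ x : M, f x ∈ N.map f → x ∈ N := by
    intro x hx
    obtain ⟨n, hn, hfn⟩ := hx
    have : x - n ∈ LinearMap.ker f := by
      simp [LinearMap.mem_ker, map_sub, hfn]
    have := hker this
    have hx' : x = (x - n) + n := by abel
    rw [hx']
    exact N.add_mem this hn
  have hcolon : ((N.map f).colon ⊤ : Ideal R) = N.colon ⊤ := by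
    ext a
    simp only [Submodule.mem_colon]
    constructor
    · intro h m _
      have := h (f m) trivial
      rw [← map_smul] at this
      exact hmem _ this
    · intro h m' _
      obtain ⟨m, rfl⟩ := hf m'
      exact ⟨a • m, h m trivial, map_smul f a m⟩
  constructor
  · rw [hcolon]; exact hdisj
  · refine ⟨s, hs, fun a m' hne hmm => ?_⟩
    obtain ⟨m, rfl⟩ := hf m'
    rw [← map_smul] at hmm hne
    have ham : a • m ∈ N := hmem _ hmm
    have hane : a • m ≠ 0 := fun h => hne (by rw [h, map_zero])
    rcases hprim a m hane ham with h | h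
    · left; rw [hcolon]; exact h
    · right; exact ⟨s • m, h, map_smul f s m⟩
end

section
/- Let K ⊆ N be submodules of an R-module M. If N is a weakly S-primary submodule of M, then N/K is a weakly S-primary submodule of M/K. -/
open Submodule

section

variable {R M M' : Type*} [CommRing R] [AddCommGroup M] [Module R M] [AddCommGroup M']
  [Module R M'] {f : M →ₗ[R] M'} {N : Submodule R M}

lemma Submodule.colon_top_map_of_surjective (hf : Function.Surjective f)
    (hker : LinearMap.ker f ≤ N) : (N.map f).colon ⊤ = N.colon ⊤ := by
  ext r
  simp only [mem_colon, Set.top_eq_univ, Set.mem_univ, true_imp_iff, hf.forall, ← map_smul,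
    ← mem_comap (f := f), comap_map_eq_self hker]

theorem IsWeaklySPrimary.map_of_surjective {S : Set R} (hN : IsWeaklySPrimary S N)
    (hf : Function.Surjective f) (hker : LinearMap.ker f ≤ N) :
    IsWeaklySPrimary S (N.map f) := by
  obtain ⟨hdisj, s, hsS, hs⟩ := hN
  rw [IsWeaklySPrimary, colon_top_map_of_surjective hf hker]
  refine ⟨hdisj, s, hsS, fun a x ↦ ?_⟩
  obtain ⟨m, rfl⟩ := hf x
  rw [← map_smul]
  intro hne hmem
  have ham : a • m ∈ N := by rwa [← mem_comap, comap_map_eq_self hker] at hmem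
  refine (hs a m (fun h0 ↦ hne (by rw [h0, map_zero])) ham).imp id fun hsm ↦ ?_
  rw [← map_smul]
  exact mem_map_of_mem hsm

end

theorem stmt15_general {R : Type*} [CommRing R] {M : Type*} [AddCommGroup M] [Module R M]
    (S : Set R)
    (K N : Submodule R M) (hKN : K ≤ N)
    (hN : IsWeaklySPrimary S N) :
    IsWeaklySPrimary S (N.map K.mkQ) :=
  hN.map_of_surjective K.mkQ_surjective (by rwa [ker_mkQ])

theorem stmt15 {R : Type*} [CommRing R] {M : Type*} [AddCommGroup M] [Module R M]
    (S : Set R) (hS : ∀ x ∈ S, ∀ y ∈ S, x * y ∈ S)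
    (K N : Submodule R M) (hKN : K ≤ N)
    (hN : IsWeaklySPrimary S N) :
    IsWeaklySPrimary S (N.map K.mkQ) :=
  stmt15_general S K N hKN hN
end

section
/- Let K ⊆ N be submodules of an R-module M. If N/K is a weakly S-primary submodule of M/K and K is an S-primary submodule of M, then N is an S-primary submodule of M. -/
open Submodule

theorem stmt16 {R : Type*} [CommRing R] {M : Type*} [AddCommGroup M] [Module R M]
    (S : Set R) (hS : ∀ x ∈ S, ∀ y ∈ S, x * y ∈ S)
    (K N : Submodule R M) (hKN : K ≤ N)
    (hNK : IsWeaklySPrimary S (N.map K.mkQ))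
    (hK : IsSPrimary S K) :
    IsSPrimary S N := by

  obtain ⟨hdisj, s₁, hs₁S, hs₁⟩ := hNK
  obtain ⟨hKdisj, s₂, hs₂S, hs₂⟩ := hK
  have hcomap : Submodule.comap K.mkQ (N.map K.mkQ) = N := by
    rw [Submodule.comap_map_mkQ, sup_eq_right.mpr hKN]
  have hcolonN : (N.colon ⊤ : Ideal R) ≤ ((N.map K.mkQ).colon ⊤ : Ideal R) := by
    intro a ha
    rw [Submodule.mem_colon] at ha ⊢
    intro p _
    obtain ⟨m, rfl⟩ := K.mkQ_surjective p
    rw [← map_smul]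
    exact Submodule.mem_map_of_mem (ha m trivial)
  have hcolonQ : (((N.map K.mkQ).colon ⊤ : Ideal R)) ≤ (N.colon ⊤ : Ideal R) := by
    intro a ha
    rw [Submodule.mem_colon] at ha ⊢
    intro m _
    have := ha (K.mkQ m) trivial
    rw [← map_smul] at this
    have : a • m ∈ Submodule.comap K.mkQ (N.map K.mkQ) := this
    rwa [hcomap] at this
  have hcolonK : (K.colon ⊤ : Ideal R) ≤ (N.colon ⊤ : Ideal R) :=
    fun a ha => Submodule.mem_colon.mpr fun m hm => hKN (Submodule.mem_colon.mp ha m hm)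
  constructor
  · rw [Set.eq_empty_iff_forall_notMem]
    rintro x ⟨hx1, hx2⟩
    rw [Set.eq_empty_iff_forall_notMem] at hdisj
    exact hdisj x ⟨hcolonN hx1, hx2⟩
  · refine ⟨s₁ * s₂, hS _ hs₁S _ hs₂S, fun a m ham => ?_⟩
    by_cases h0 : a • K.mkQ m = 0
    · -- a • m ∈ K
      have hK : a • m ∈ K := by
        rw [← map_smul] at h0
        exact (Submodule.Quotient.mk_eq_zero K).mp h0
      rcases hs₂ a m hK with h | h
      · left
        have : s₂ * a ∈ (N.colon ⊤ : Ideal R).radical := Ideal.radical_mono hcolonK h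
        have := Ideal.mul_mem_left _ s₁ this
        rwa [← mul_assoc] at this
      · right
        rw [mul_smul]
        exact Submodule.smul_mem _ s₁ (hKN h)
    · have hmem : a • K.mkQ m ∈ N.map K.mkQ := by
        rw [← map_smul]
        exact Submodule.mem_map_of_mem ham
      rcases hs₁ a (K.mkQ m) h0 hmem with h | h
      · left
        have : s₁ * a ∈ (N.colon ⊤ : Ideal R).radical := Ideal.radical_mono hcolonQ h
        have := Ideal.mul_mem_left _ s₂ this
        have heq : s₂ * (s₁ * a) = s₁ * s₂ * a := by ring
        rwa [heq] at this
      · right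
        rw [← map_smul] at h
        have hm' : s₁ • m ∈ N := by rw [← hcomap]; exact h
        rw [mul_comm, mul_smul]
        exact Submodule.smul_mem _ s₂ hm'
end

section
/- Let N be a weakly S-primary submodule of an R-module M and K a submodule of M such that (K :_R M)M = K and (K :_R M) ∩ S ≠ ∅. Then N ∩ K is a weakly S-primary submodule of M. -/
open Submodule

/-
Pick `t ∈ S` with `t M ⊆ K`. If `s` witnesses that `N` is weakly `S`-primary, then `s t` witnesses
it for `N ∩ K`: multiplying by `t` pushes both alternatives `s a ∈ √(N : M)` and `s m ∈ N` into
`N ∩ K`, since `√(N ∩ K : M) = √(N : M) ∩ √(K : M)`.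
-/

namespace Submodule

variable {R : Type*} [CommRing R] {M : Type*} [AddCommGroup M] [Module R M] {N K : Submodule R M}
  {s t : R}

theorem mul_mem_radical_inf_colon {a : R} (ha : s * a ∈ (N.colon ⊤ : Ideal R).radical)
    (ht : t ∈ K.colon ⊤) : s * t * a ∈ ((N ⊓ K).colon ⊤ : Ideal R).radical := by
  rw [inf_colon, Ideal.radical_inf]
  refine ⟨?_, Ideal.le_radical ?_⟩
  · rw [mul_right_comm]
    exact Ideal.mul_mem_right t _ ha
  · rw [mul_assoc]
    exact Ideal.mul_mem_left _ s (Ideal.mul_mem_right a _ ht)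

theorem mul_smul_mem_inf {m : M} (hm : s • m ∈ N) (ht : t ∈ K.colon ⊤) :
    (s * t) • m ∈ N ⊓ K :=
  ⟨mul_comm t s ▸ mul_smul t s m ▸ N.smul_mem t hm,
    mul_smul s t m ▸ K.smul_mem s (mem_colon.mp ht m trivial)⟩

end Submodule

theorem IsWeaklySPrimary.inf_of_mem_colon {R : Type*} [CommRing R] {M : Type*} [AddCommGroup M]
    [Module R M] {S : Set R} (hS : ∀ x ∈ S, ∀ y ∈ S, x * y ∈ S) {N K : Submodule R M}
    (hN : IsWeaklySPrimary S N) {t : R} (htK : t ∈ K.colon ⊤) (htS : t ∈ S) :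
    IsWeaklySPrimary S (N ⊓ K) := by
  obtain ⟨hdisj, s, hsS, hs⟩ := hN
  refine ⟨Set.subset_eq_empty (Set.inter_subset_inter_left _ (colon_mono inf_le_left subset_rfl))
    hdisj, s * t, hS s hsS t htS, fun a m hne hm => ?_⟩
  exact (hs a m hne hm.1).imp (mul_mem_radical_inf_colon · htK) (mul_smul_mem_inf · htK)

theorem stmt17_general {R : Type*} [CommRing R] {M : Type*} [AddCommGroup M] [Module R M]
    (S : Set R) (hS : ∀ x ∈ S, ∀ y ∈ S, x * y ∈ S)
    (N : Submodule R M) (hN : IsWeaklySPrimary S N)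
    (K : Submodule R M)
    (hK2 : (((K.colon ⊤ : Ideal R) : Set R) ∩ S).Nonempty) :
    IsWeaklySPrimary S (N ⊓ K) := by
  obtain ⟨t, htK, htS⟩ := hK2
  exact hN.inf_of_mem_colon hS htK htS

theorem stmt17 {R : Type*} [CommRing R] {M : Type*} [AddCommGroup M] [Module R M]
    (S : Set R) (hS : ∀ x ∈ S, ∀ y ∈ S, x * y ∈ S)
    (N : Submodule R M) (hN : IsWeaklySPrimary S N)
    (K : Submodule R M)
    (hK1 : (K.colon ⊤ : Ideal R) • (⊤ : Submodule R M) = K)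
    (hK2 : (((K.colon ⊤ : Ideal R) : Set R) ∩ S).Nonempty) :
    IsWeaklySPrimary S (N ⊓ K) :=
  stmt17_general S hS N hN K hK2
end

section
/- Let R, R' be commutative rings, S ⊆ R and S' ⊆ R' multiplicatively closed subsets, M an R-module, M' an R'-module, and N ⊆ M, N' ⊆ M' non-zero submodules. If N × N' is a weakly (S × S')-primary submodule of the (R × R')-module M × M', then either N is an S-primary submodule of M with (N' :_{R'} M') ∩ S' ≠ ∅, or N' is an S'-primary submodule of M' with (N :_R M) ∩ S ≠ ∅. -/
open Submodule

section Prod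

variable {R R' : Type*} [CommRing R] [CommRing R']
variable {M M' : Type*} [AddCommGroup M] [Module R M] [AddCommGroup M'] [Module R' M']

/-- The componentwise `(R × R')`-module structure on `M × M'`. -/
instance prodProdModule : Module (R × R') (M × M') where
  smul r m := (r.1 • m.1, r.2 • m.2)
  one_smul m := Prod.ext (one_smul _ _) (one_smul _ _)
  mul_smul r s m := Prod.ext (mul_smul _ _ _) (mul_smul _ _ _)
  smul_zero r := Prod.ext (smul_zero _) (smul_zero _)
  smul_add r m n := Prod.ext (smul_add _ _ _) (smul_add _ _ _)
  add_smul r s m := Prod.ext (add_smul _ _ _) (add_smul _ _ _)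
  zero_smul m := Prod.ext (zero_smul _ _) (zero_smul _ _)

/-- The submodule `N × N'` of the `(R × R')`-module `M × M'`. -/
def prodSubmodule (N : Submodule R M) (N' : Submodule R' M') :
    Submodule (R × R') (M × M') where
  carrier := (N : Set M) ×ˢ (N' : Set M')
  add_mem' ha hb := ⟨add_mem ha.1 hb.1, add_mem ha.2 hb.2⟩
  zero_mem' := ⟨zero_mem _, zero_mem _⟩
  smul_mem' r x hx := ⟨N.smul_mem r.1 hx.1, N'.smul_mem r.2 hx.2⟩

/-!
Fix a witness `(s, s')` of the weak condition and a nonzero `n' ∈ N'`. If `a • m ∈ N`, then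
`(a, 1) • (m, n')` is a nonzero element of `N × N'`, so `s * a ∈ √(N : M)` (together with
`s' ∈ √(N' : M')`) or `s • m ∈ N`: thus `N` satisfies the `S`-primary condition with witness `s`,
and symmetrically `N'` with witness `s'`. Either `s ∈ (N : M)`, or some `s • m ∉ N` and the case
`a = 0` forces `s' ∈ √(N' : M')`, so a power of `s'` lies in `(N' : M') ∩ S'`. Since
`(N × N' : M × M') = (N : M) × (N' : M')` misses `S × S'`, the colon of the other factor then
misses its multiplicative set.
-/

theorem Ideal.inter_nonempty_of_mem_radical {R : Type*} [CommSemiring R] {S : Set R}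
    (hS : ∀ x ∈ S, ∀ y ∈ S, x * y ∈ S) {I : Ideal R} {s : R} (hs : s ∈ S)
    (h : s ∈ I.radical) : ((I : Set R) ∩ S).Nonempty := by
  obtain ⟨n, hn⟩ := h
  have hpow : ∀ k : ℕ, s ^ (k + 1) ∈ S := by
    intro k
    induction k with
    | zero => simpa using hs
    | succ k ih => rw [pow_succ]; exact hS _ ih _ hs
  exact ⟨s ^ (n + 1), by rw [pow_succ]; exact I.mul_mem_right _ hn, hpow n⟩

theorem Ideal.fst_mem_radical_of_mem_radical_prod {R R' : Type*}
    [CommSemiring R] [CommSemiring R']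
    {I : Ideal R} {J : Ideal R'} {r : R × R'} (h : r ∈ (I.prod J).radical) :
    r.1 ∈ I.radical := by
  obtain ⟨n, hn⟩ := h
  exact ⟨n, by simpa using ((Ideal.mem_prod _ _).1 hn).1⟩

theorem Ideal.snd_mem_radical_of_mem_radical_prod {R R' : Type*}
    [CommSemiring R] [CommSemiring R']
    {I : Ideal R} {J : Ideal R'} {r : R × R'} (h : r ∈ (I.prod J).radical) :
    r.2 ∈ J.radical := by
  obtain ⟨n, hn⟩ := h
  exact ⟨n, by simpa using ((Ideal.mem_prod _ _).1 hn).2⟩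

section ProdSubmodule

variable {N : Submodule R M} {N' : Submodule R' M'}

theorem prodProdModule_smul_def (r : R × R') (x : M × M') :
    r • x = (r.1 • x.1, r.2 • x.2) :=
  rfl

theorem colon_top_prodSubmodule :
    (prodSubmodule N N').colon ⊤ = (N.colon ⊤ : Ideal R).prod (N'.colon ⊤ : Ideal R') := by
  ext r
  simp only [mem_colon, Ideal.mem_prod]
  constructor
  · intro h
    exact ⟨fun m _ => (h (m, 0) trivial).1, fun m' _ => (h (0, m') trivial).2⟩
  · rintro ⟨h, h'⟩ x _
    exact ⟨h x.1 trivial, h' x.2 trivial⟩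

theorem colon_top_inter_eq_empty_or_of_prodSubmodule {S : Set R} {S' : Set R'}
    (h : (((prodSubmodule N N').colon ⊤ : Ideal (R × R')) : Set (R × R')) ∩ S ×ˢ S' = ∅) :
    ((N.colon ⊤ : Ideal R) : Set R) ∩ S = ∅ ∨ ((N'.colon ⊤ : Ideal R') : Set R') ∩ S' = ∅ := by
  rw [colon_top_prodSubmodule, Ideal.coe_prod, Set.prod_inter_prod] at h
  exact Set.prod_eq_empty_iff.1 h

variable {s : R} {s' : R'}
  (hP : ∀ (a : R × R') (m : M × M'), a • m ≠ 0 → a • m ∈ prodSubmodule N N' →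
    (s, s') * a ∈ ((prodSubmodule N N').colon ⊤ : Ideal (R × R')).radical ∨
      (s, s') • m ∈ prodSubmodule N N')
include hP

theorem primary_fst_of_weaklyPrimary_prodSubmodule (hN' : N' ≠ ⊥) (a : R) (m : M)
    (ham : a • m ∈ N) :
    (s * a ∈ (N.colon ⊤ : Ideal R).radical ∧ s' ∈ (N'.colon ⊤ : Ideal R').radical) ∨
      s • m ∈ N := by
  obtain ⟨n', hn'N', hn'0⟩ := exists_mem_ne_zero_of_ne_bot hN'
  have hne : (a, (1 : R')) • (m, n') ≠ 0 := by
    simp [prodProdModule_smul_def, hn'0]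
  rcases hP _ _ hne ⟨ham, by simpa [prodProdModule_smul_def] using hn'N'⟩ with hrad | hsm
  · rw [colon_top_prodSubmodule] at hrad
    exact Or.inl ⟨Ideal.fst_mem_radical_of_mem_radical_prod hrad,
      by simpa using Ideal.snd_mem_radical_of_mem_radical_prod hrad⟩
  · exact Or.inr hsm.1

theorem primary_snd_of_weaklyPrimary_prodSubmodule (hN : N ≠ ⊥) (a' : R') (m' : M')
    (ham : a' • m' ∈ N') :
    (s' * a' ∈ (N'.colon ⊤ : Ideal R').radical ∧ s ∈ (N.colon ⊤ : Ideal R).radical) ∨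
      s' • m' ∈ N' := by
  obtain ⟨n, hnN, hn0⟩ := exists_mem_ne_zero_of_ne_bot hN
  have hne : ((1 : R), a') • (n, m') ≠ 0 := by
    simp [prodProdModule_smul_def, hn0]
  rcases hP _ _ hne ⟨by simpa [prodProdModule_smul_def] using hnN, ham⟩ with hrad | hsm
  · rw [colon_top_prodSubmodule] at hrad
    exact Or.inl ⟨Ideal.snd_mem_radical_of_mem_radical_prod hrad,
      by simpa using Ideal.fst_mem_radical_of_mem_radical_prod hrad⟩
  · exact Or.inr hsm.2

end ProdSubmodule

theorem stmt18_general
    (S : Set R)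
    (S' : Set R') (hS' : ∀ x ∈ S', ∀ y ∈ S', x * y ∈ S')
    (N : Submodule R M) (N' : Submodule R' M') (hN0 : N ≠ ⊥) (hN'0 : N' ≠ ⊥)
    (h : IsWeaklySPrimary (S ×ˢ S') (prodSubmodule N N')) :
    (IsSPrimary S N ∧ (((N'.colon ⊤ : Ideal R') : Set R') ∩ S').Nonempty) ∨
      (IsSPrimary S' N' ∧ (((N.colon ⊤ : Ideal R) : Set R) ∩ S).Nonempty) := by
  obtain ⟨hdisj, ⟨s, s'⟩, ⟨hs, hs'⟩, hP⟩ := h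
  have hdisj' := colon_top_inter_eq_empty_or_of_prodSubmodule hdisj
  have hN := primary_fst_of_weaklyPrimary_prodSubmodule hP hN'0
  have hN' := primary_snd_of_weaklyPrimary_prodSubmodule hP hN0
  by_cases hsN : s ∈ N.colon ⊤
  · have hne : (((N.colon ⊤ : Ideal R) : Set R) ∩ S).Nonempty := ⟨s, hsN, hs⟩
    exact Or.inr ⟨⟨hdisj'.resolve_left hne.ne_empty, s', hs',
      fun a m ham => (hN' a m ham).imp_left And.left⟩, hne⟩
  · obtain ⟨m, hm⟩ : ∃ m, s • m ∉ N := by simpa [mem_colon] using hsN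
    have hs'N' : s' ∈ (N'.colon ⊤ : Ideal R').radical :=
      ((hN 0 m (by simp)).resolve_right hm).2
    have hne := Ideal.inter_nonempty_of_mem_radical hS' hs' hs'N'
    exact Or.inl ⟨⟨hdisj'.resolve_right hne.ne_empty, s, hs,
      fun a m ham => (hN a m ham).imp_left And.left⟩, hne⟩

theorem stmt18
    (S : Set R) (hS : ∀ x ∈ S, ∀ y ∈ S, x * y ∈ S)
    (S' : Set R') (hS' : ∀ x ∈ S', ∀ y ∈ S', x * y ∈ S')
    (N : Submodule R M) (N' : Submodule R' M') (hN0 : N ≠ ⊥) (hN'0 : N' ≠ ⊥)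
    (h : IsWeaklySPrimary (S ×ˢ S') (prodSubmodule N N')) :
    (IsSPrimary S N ∧ (((N'.colon ⊤ : Ideal R') : Set R') ∩ S').Nonempty) ∨
      (IsSPrimary S' N' ∧ (((N.colon ⊤ : Ideal R) : Set R) ∩ S).Nonempty) :=
  stmt18_general S S' hS' N N' hN0 hN'0 h

end Prod
end

section
/- Let R be a commutative ring, M an R-module, S ⊆ R a multiplicatively closed subset, I an ideal of R and K ⊆ N submodules of M with IM ⊆ N. If I ⋉ N is a weakly (S ⋉ K)-primary ideal of the idealization ring R ⋉ M, then I is a weakly S-primary ideal of R. -/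
open Submodule

theorem stmt19 {R : Type*} [CommRing R] {M : Type*} [AddCommGroup M] [Module R M]
    [Module Rᵐᵒᵖ M] [IsCentralScalar R M]
    (S : Set R) (hS : ∀ x ∈ S, ∀ y ∈ S, x * y ∈ S)
    (I : Ideal R) (K N : Submodule R M) (hKN : K ≤ N)
    (hIM : ∀ a ∈ I, ∀ m : M, a • m ∈ N)
    (J : Ideal (TrivSqZeroExt R M))
    (hJ : ∀ x : TrivSqZeroExt R M, x ∈ J ↔ x.fst ∈ I ∧ x.snd ∈ N)
    (hweak : IsWeaklySPrimaryIdeal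
      {x : TrivSqZeroExt R M | x.fst ∈ S ∧ x.snd ∈ K} J) :
    IsWeaklySPrimaryIdeal S I := by
  obtain ⟨hdisj, s, ⟨hsS, hsK⟩, hs⟩ := hweak
  constructor
  · rw [Set.eq_empty_iff_forall_notMem]
    rintro r ⟨hrI, hrS⟩
    have : (TrivSqZeroExt.inl r : TrivSqZeroExt R M) ∈ (J : Set (TrivSqZeroExt R M)) ∩
        {x : TrivSqZeroExt R M | x.fst ∈ S ∧ x.snd ∈ K} :=
      ⟨(hJ _).mpr (by simpa using hrI), by simp [hrS]⟩
    rw [hdisj] at this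
    exact this
  · refine ⟨s.fst, hsS, fun a b hab habI => ?_⟩
    have hx : (TrivSqZeroExt.inl a * TrivSqZeroExt.inl b : TrivSqZeroExt R M) ≠ 0 := by
      rw [← TrivSqZeroExt.inl_mul]
      simpa [TrivSqZeroExt.ext_iff] using hab
    rcases hs (.inl a) (.inl b) hx ((hJ _).mpr (by simp [habI])) with h | h
    · left
      obtain ⟨n, hn⟩ := Ideal.mem_radical_iff.mp h
      exact Ideal.mem_radical_iff.mpr ⟨n, by
        simpa [TrivSqZeroExt.fst_pow] using ((hJ _).mp hn).1⟩
    · right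
      simpa using ((hJ _).mp h).1
end
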